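/- arXiv:1010.2419 — 3 statements merged into one kernel-verified Lean document; each statement's English description precedes it below -/
import Mathlib

section
/- Let F be a field of characteristic different from 2, V an F-vector space with dim V > 1, and f : V × V → F a non-degenerate symmetric bilinear form. Let J(V,f) be the Jordan algebra of the bilinear form f. Then every 1/2-derivation φ of J(V,f) is of the form φ(x) = α·x for some α ∈ F. -/
/-!
Evaluating the half-derivation identity at the unit `1 = (1, 0)` gives `φ y = ½ (φ 1 · y + φ y)`,
so `φ` is left multiplication by `c = φ 1 = (α, u)`. Applied to two vectors `v, w`, the identity
then forces `f u v • u = f u u • v` for every `v`. If `u ≠ 0`, either `f u u = 0`, and `u` lies in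
the radical of `f`, or every vector is a multiple of `u`, and `dim V ≤ 1`. Hence `u = 0` and
`φ = α • id`.
-/

/-- The multiplication of the Jordan algebra `J(V,f)` of a bilinear form
`f : V × V → F`, defined on `F ⊕ V` by
`(α + v)·(β + w) = (αβ + f(v,w)) + (αw + βv)`. -/
def jordanFormMul {F V : Type*} [Field F] [AddCommGroup V] [Module F V]
    (f : V →ₗ[F] V →ₗ[F] F) (x y : F × V) : F × V :=
  (x.1 * y.1 + f x.2 y.2, x.1 • y.2 + y.1 • x.2)

section HalfDerivation

variable {F A : Type*} [Field F] [AddCommGroup A] [Module F A]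

theorem apply_eq_mul_apply_unit_of_half_derivation (hchar : (2 : F) ≠ 0) (mul : A → A → A) (e : A)
    (he : ∀ y, mul e y = y) (φ : A → A)
    (hφ : ∀ x y, φ (mul x y) = (1 / 2 : F) • (mul (φ x) y + mul x (φ y))) (y : A) :
    φ y = mul (φ e) y := by
  have h := hφ e y
  rw [he, he] at h
  have h2 : (2 : F) • φ y = mul (φ e) y + φ y := by
    conv_lhs => rw [h, smul_smul, mul_one_div_cancel hchar, one_smul]
  rw [two_smul] at h2
  exact add_right_cancel h2

end HalfDerivation

section BilinearForm

variable {F V : Type*} [Field F] [AddCommGroup V] [Module F V]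

@[simp]
theorem jordanFormMul_one_left (f : V →ₗ[F] V →ₗ[F] F) (z : F × V) :
    jordanFormMul f (1, 0) z = z := by
  simp [jordanFormMul]

theorem smul_snd_of_jordanFormMul_left_half_derivation (f : V →ₗ[F] V →ₗ[F] F) (c : F × V)
    (hc : ∀ x y, jordanFormMul f c (jordanFormMul f x y) = (1 / 2 : F) •
      (jordanFormMul f (jordanFormMul f c x) y + jordanFormMul f x (jordanFormMul f c y)))
    (v w : V) :
    f v w • c.2 = (1 / 2 : F) • (f c.2 v • w + f c.2 w • v) := by
  simpa [jordanFormMul, smul_smul, smul_add] using congrArg Prod.snd (hc (0, v) (0, w))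

theorem apply_smul_eq_apply_self_smul (hchar : (2 : F) ≠ 0) (f : V →ₗ[F] V →ₗ[F] F)
    (hsymm : ∀ v w : V, f v w = f w v) (u : V)
    (hu : ∀ v w, f v w • u = (1 / 2 : F) • (f u v • w + f u w • v)) (v : V) :
    f u v • u = f u u • v := by
  have h : (2 : F) • (f v u • u) = f u v • u + f u u • v := by
    rw [hu v u, smul_smul, mul_one_div_cancel hchar, one_smul]
  rw [two_smul, hsymm v u] at h
  exact add_left_cancel h

theorem eq_zero_of_forall_apply_smul_eq_apply_self_smul (hdim : 1 < Module.rank F V)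
    (f : V →ₗ[F] V →ₗ[F] F) (hnondeg : ∀ v : V, (∀ w : V, f v w = 0) → v = 0) (u : V)
    (hu : ∀ v, f u v • u = f u u • v) : u = 0 := by
  by_contra hu0
  by_cases hfu : f u u = 0
  · refine hu0 (hnondeg u fun w => ?_)
    have h := hu w
    rw [hfu, zero_smul, smul_eq_zero] at h
    exact h.resolve_right hu0
  · have hle : Module.rank F V ≤ 1 := by
      refine rank_le_one_iff.mpr ⟨u, fun v => ⟨f u v / f u u, ?_⟩⟩
      rw [div_eq_inv_mul, mul_smul, hu v, inv_smul_smul₀ hfu]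
    exact hdim.not_ge hle

end BilinearForm

/-- **1/2-derivations of the Jordan algebra of a bilinear form.**
Let `F` be a field of characteristic not `2`, `V` an `F`-vector space with
`dim V > 1` and `f` a non-degenerate symmetric bilinear form on `V`.
Then every `1/2`-derivation `φ` of `J(V,f)` is of the form `φ x = α • x`
for some `α ∈ F`. -/
theorem half_derivation_of_jordan_algebra_of_bilinear_form
    {F V : Type*} [Field F] [AddCommGroup V] [Module F V]
    (hchar : (2 : F) ≠ 0)
    (hdim : 1 < Module.rank F V)
    (f : V →ₗ[F] V →ₗ[F] F)
    (hsymm : ∀ v w : V, f v w = f w v)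
    (hnondeg : ∀ v : V, (∀ w : V, f v w = 0) → v = 0)
    (φ : (F × V) →ₗ[F] (F × V))
    (hφ : ∀ x y : F × V,
      φ (jordanFormMul f x y)
        = (1 / 2 : F) • (jordanFormMul f (φ x) y + jordanFormMul f x (φ y))) :
    ∃ α : F, ∀ x : F × V, φ x = α • x := by
  obtain ⟨c, hc⟩ : ∃ c, ∀ y, φ y = jordanFormMul f c y :=
    ⟨_, apply_eq_mul_apply_unit_of_half_derivation hchar (jordanFormMul f) (1, 0)
      (jordanFormMul_one_left f) φ hφ⟩
  simp only [hc] at hφ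
  have hu : c.2 = 0 :=
    eq_zero_of_forall_apply_smul_eq_apply_self_smul hdim f hnondeg c.2 <|
      apply_smul_eq_apply_self_smul hchar f hsymm c.2 <|
        smul_snd_of_jordanFormMul_left_half_derivation f c hφ
  refine ⟨c.1, fun x => ?_⟩
  ext <;> simp [hc, jordanFormMul, hu]
end

section
/- Let F be a field of characteristic different from 2 and n ≥ 3. Let H_n(F) be the Jordan algebra of symmetric n×n matrices over F, i.e. the subspace {X ∈ M_n(F) : Xᵀ = X} equipped with the product X∘Y = (1/2)(XY + YX). Then every 1/2-derivation φ of H_n(F) is of the form φ(X) = α·X for some α ∈ F. -/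
/-- The Jordan (symmetrized) product `X ∘ Y = (1/2)(XY + YX)` on matrices. -/
def jordMul {F : Type*} [Field F] {n : ℕ}
    (X Y : Matrix (Fin n) (Fin n) F) : Matrix (Fin n) (Fin n) F :=
  (1 / 2 : F) • (X * Y + Y * X)

/-- The subspace `H_n(F)` of symmetric `n × n` matrices over `F`. -/
def symmMatrices (F : Type*) [Field F] (n : ℕ) :
    Submodule F (Matrix (Fin n) (Fin n) F) where
  carrier := {X | X.transpose = X}
  add_mem' := by
    intro a b ha hb
    simp only [Set.mem_setOf_eq] at *
    rw [Matrix.transpose_add, ha, hb]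
  zero_mem' := by simp
  smul_mem' := by
    intro c X hX
    simp only [Set.mem_setOf_eq] at *
    rw [Matrix.transpose_smul, hX]

/-!
Feeding `Y = 1` into the half-derivation identity gives `φ X = X ∘ c` with `c = φ 1`; feeding
`X = Y = x` then gives `x² ∘ c = (x ∘ c) ∘ x`, i.e. `⁅x, ⁅x, c⁆⁆ = 0` for every symmetric `x`.
Testing this on `x = E_ii` kills the off-diagonal entries of `c`, and on `x = E_ij + E_ji` it
gives `2 (c_ii - c_jj) = 0`, so `c` is scalar.
-/

open Matrix

namespace Matrix

variable {m R : Type*} [Fintype m] [DecidableEq m] [Ring R]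

theorem apply_eq_zero_of_lie_lie_single_eq_zero {c : Matrix m m R} {i j : m} (hij : i ≠ j)
    (hc : ⁅single i i (1 : R), ⁅single i i (1 : R), c⁆⁆ = 0) : c i j = 0 := by
  simpa [Ring.lie_def, sub_mul, mul_sub, mul_assoc, hij, hij.symm] using congr($hc i j)

theorem diag_eq_of_lie_lie_single_add_single_eq_zero [NoZeroDivisors R] (h2 : (2 : R) ≠ 0)
    {c : Matrix m m R} {i j : m} (hij : i ≠ j)
    (hc : ⁅single i j (1 : R) + single j i 1, ⁅single i j (1 : R) + single j i 1, c⁆⁆ = 0) :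
    c i i = c j j := by
  have hii : c i i - c j j - (c j j - c i i) = 0 := by
    simpa [Ring.lie_def, sub_mul, mul_sub, add_mul, mul_add, mul_assoc, hij, hij.symm]
      using congr($hc i i)
  have : (2 : R) * (c i i - c j j) = 0 := by rw [← hii]; noncomm_ring
  exact sub_eq_zero.mp <| (mul_eq_zero.mp this).resolve_left h2

theorem mem_range_scalar_of_lie_lie_eq_zero [NoZeroDivisors R] (h2 : (2 : R) ≠ 0)
    {c : Matrix m m R} (hc : ∀ x : Matrix m m R, x.IsSymm → ⁅x, ⁅x, c⁆⁆ = 0) :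
    c ∈ Set.range (scalar m) := by
  rcases isEmpty_or_nonempty m with _ | ⟨⟨i₀⟩⟩
  · exact ⟨0, Subsingleton.elim _ _⟩
  refine ⟨c i₀ i₀, ext fun i j => ?_⟩
  rcases eq_or_ne i j with rfl | hij
  · rcases eq_or_ne i₀ i with rfl | hi
    · simp
    · simpa using diag_eq_of_lie_lie_single_add_single_eq_zero h2 hi
        (hc _ (by simp [IsSymm, add_comm]))
  · simpa [hij] using (apply_eq_zero_of_lie_lie_single_eq_zero hij (hc _ (by simp [IsSymm]))).symm

end Matrix

section JordanAlgebra

variable {F : Type*} [Field F] {n : ℕ}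

theorem mem_symmMatrices {X : Matrix (Fin n) (Fin n) F} : X ∈ symmMatrices F n ↔ X.IsSymm :=
  Iff.rfl

theorem jordMul_one (h2 : (2 : F) ≠ 0) (X : Matrix (Fin n) (Fin n) F) : jordMul X 1 = X := by
  rw [jordMul, mul_one, one_mul, ← two_smul F, smul_smul, one_div_mul_cancel h2, one_smul]

theorem jordMul_self (h2 : (2 : F) ≠ 0) (X : Matrix (Fin n) (Fin n) F) : jordMul X X = X * X := by
  rw [jordMul, ← two_smul F, smul_smul, one_div_mul_cancel h2, one_smul]

theorem jordMul_scalar (h2 : (2 : F) ≠ 0) (X : Matrix (Fin n) (Fin n) F) (a : F) :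
    jordMul X (scalar (Fin n) a) = a • X := by
  rw [scalar_apply, ← smul_one_eq_diagonal, jordMul, mul_smul_comm, smul_mul_assoc, mul_one,
    one_mul, ← two_smul F, smul_smul, one_div_mul_cancel h2, one_smul]

def IsHalfDerivation (φ : symmMatrices F n →ₗ[F] symmMatrices F n) : Prop :=
  ∀ X Y Z : symmMatrices F n, (Z : Matrix (Fin n) (Fin n) F) = jordMul X Y →
    (φ Z : Matrix (Fin n) (Fin n) F) = (1 / 2 : F) • (jordMul (φ X) Y + jordMul X (φ Y))

namespace IsHalfDerivation

variable {φ : symmMatrices F n →ₗ[F] symmMatrices F n}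

theorem apply_eq_jordMul (hφ : IsHalfDerivation φ) (h2 : (2 : F) ≠ 0) (X : symmMatrices F n) :
    (φ X : Matrix (Fin n) (Fin n) F) = jordMul X (φ ⟨1, isSymm_one⟩) := by
  have h := hφ X ⟨1, isSymm_one⟩ X (jordMul_one h2 _).symm
  rw [jordMul_one h2] at h
  linear_combination (norm := match_scalars <;> field_simp <;> ring) (2 : F) • h

theorem lie_lie_eq_zero (hφ : IsHalfDerivation φ) (h2 : (2 : F) ≠ 0)
    {x : Matrix (Fin n) (Fin n) F} (hx : x.IsSymm) :
    ⁅x, ⁅x, (φ ⟨1, isSymm_one⟩ : Matrix (Fin n) (Fin n) F)⁆⁆ = 0 := by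
  have hx2 : x * x ∈ symmMatrices F n := mem_symmMatrices.2 (by simpa [sq] using hx.pow 2)
  have h := hφ ⟨x, hx⟩ ⟨x, hx⟩ ⟨x * x, hx2⟩ (jordMul_self h2 x).symm
  rw [apply_eq_jordMul hφ h2 ⟨x * x, _⟩, apply_eq_jordMul hφ h2 ⟨x, hx⟩] at h
  simp only [jordMul, Ring.lie_def, smul_mul_assoc, mul_smul_comm, smul_add, add_mul, mul_add,
    mul_sub, sub_mul, mul_assoc] at h ⊢
  linear_combination (norm := match_scalars <;> field_simp <;> ring) (4 : F) • h

end IsHalfDerivation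

end JordanAlgebra

theorem half_derivation_of_symmetric_matrix_jordan_algebra_general
    {F : Type*} [Field F] (hchar : (2 : F) ≠ 0) (n : ℕ)
    (φ : symmMatrices F n →ₗ[F] symmMatrices F n)
    (hφ : ∀ X Y Z : symmMatrices F n,
      (Z : Matrix (Fin n) (Fin n) F)
          = jordMul (X : Matrix (Fin n) (Fin n) F) (Y : Matrix (Fin n) (Fin n) F) →
      (φ Z : Matrix (Fin n) (Fin n) F)
        = (1 / 2 : F) • (jordMul (φ X : Matrix (Fin n) (Fin n) F) (Y : Matrix (Fin n) (Fin n) F)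
            + jordMul (X : Matrix (Fin n) (Fin n) F) (φ Y : Matrix (Fin n) (Fin n) F))) :
    ∃ α : F, ∀ X : symmMatrices F n, φ X = α • X := by
  have hφ' : IsHalfDerivation φ := hφ
  obtain ⟨α, hα⟩ := mem_range_scalar_of_lie_lie_eq_zero hchar
    fun _ hx => hφ'.lie_lie_eq_zero hchar hx
  refine ⟨α, fun X => Subtype.ext ?_⟩
  rw [hφ'.apply_eq_jordMul hchar X, ← hα, jordMul_scalar hchar, Submodule.coe_smul]

/-- **1/2-derivations of the Jordan algebra of symmetric matrices.**
Let `F` be a field of characteristic not `2` and `n ≥ 3`.  Every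
`1/2`-derivation `φ` of the Jordan algebra `H_n(F)` of symmetric `n × n`
matrices (with product `X ∘ Y = (1/2)(XY + YX)`) is of the form
`φ X = α • X` for some `α ∈ F`.  (The `1/2`-derivation property is stated
via representatives: whenever `Z ∈ H_n(F)` equals `X ∘ Y` as a matrix,
`φ Z = (1/2) • (φ X ∘ Y + X ∘ φ Y)`.) -/
theorem half_derivation_of_symmetric_matrix_jordan_algebra
    {F : Type*} [Field F] (hchar : (2 : F) ≠ 0) (n : ℕ) (hn : 3 ≤ n)
    (φ : symmMatrices F n →ₗ[F] symmMatrices F n)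
    (hφ : ∀ X Y Z : symmMatrices F n,
      (Z : Matrix (Fin n) (Fin n) F)
          = jordMul (X : Matrix (Fin n) (Fin n) F) (Y : Matrix (Fin n) (Fin n) F) →
      (φ Z : Matrix (Fin n) (Fin n) F)
        = (1 / 2 : F) • (jordMul (φ X : Matrix (Fin n) (Fin n) F) (Y : Matrix (Fin n) (Fin n) F)
            + jordMul (X : Matrix (Fin n) (Fin n) F) (φ Y : Matrix (Fin n) (Fin n) F))) :
    ∃ α : F, ∀ X : symmMatrices F n, φ X = α • X :=
  half_derivation_of_symmetric_matrix_jordan_algebra_general hchar n φ hφ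
end

section
/- Let F be a field of characteristic 0 and n ≥ 2. Let Γ_n be the Grassmann (exterior) algebra over F on anticommuting generators e₁, …, e_n (eᵢ² = 0, eᵢe_j = −e_je_i), with parity grading Γ_n = (Γ_n)₀ ⊕ (Γ_n)₁ by even/odd word length, and write p(a) for the parity of a homogeneous element a. For each j let ∂/∂e_j be the linear map with ∂/∂e_j(e_{i₁}⋯e_{i_k}) = (−1)^{l−1} e_{i₁}⋯e_{i_{l−1}}e_{i_{l+1}}⋯e_{i_k} if j = i_l (for i₁ < ⋯ < i_k), and 0 if j does not occur. For parity-homogeneous f, g set {f,g} = (−1)^{p(f)} Σ_{j=1}^{n} (∂f/∂e_j)(∂g/∂e_j). Let J(Γ_n) = Γ_n ⊕ Γ̄_n, where Γ̄_n is an isomorphic copy of Γ_n via a ↦ ā, with the bilinear product • determined on parity-homogeneous a, b ∈ Γ_n by: a • b = ab, a • b̄ = (ab)‾, ā • b = (−1)^{p(b)} (ab)‾, and ā • b̄ = (−1)^{p(b)} {a,b}. Then every 1/2-derivation φ of J(Γ_n) is of the form φ(x) = α·x for some α ∈ F. -/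
/-!
A ½-derivation `φ` of an algebra with unit `1` is multiplication by `c = φ 1`, on either side.
In `J(Γ)` write `c = a + b̄`. Testing the ½-derivation identity on the pairs `(1̄, ēⱼ)` and
`(ēⱼ, ēⱼ)` gives `∂ⱼ a = 0` for every `j` (up to the parity involution) and `b = 0`. An element
killed by every `∂ⱼ` is a scalar, because the Euler operator `Σⱼ eⱼ ∂ⱼ` acts on `⋀ᵏ` as
multiplication by `k`. Hence `c = α • 1` and `φ = α • id`.
-/

open CliffordAlgebra (involute evenOdd)

def IsDeltaDerivation {K M : Type*} [CommSemiring K] [AddCommMonoid M] [Module K M] (δ : K)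
    (mul : M →ₗ[K] M →ₗ[K] M) (φ : M →ₗ[K] M) : Prop :=
  ∀ x y, φ (mul x y) = δ • (mul (φ x) y + mul x (φ y))

namespace IsDeltaDerivation

variable {K M : Type*} [Field K] [NeZero (2 : K)] [AddCommGroup M] [Module K M]
  {mul : M →ₗ[K] M →ₗ[K] M} {φ : M →ₗ[K] M} {e : M}

theorem apply_eq_mul_left (hφ : IsDeltaDerivation (1 / 2) mul φ) (he : ∀ x, mul e x = x)
    (x : M) : φ x = mul (φ e) x := by
  have h := congrArg ((2 : K) • ·) (hφ e x)
  simp only [he, smul_smul, mul_one_div_cancel (two_ne_zero' K), one_smul, two_smul] at h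
  exact add_right_cancel h

theorem apply_eq_mul_right (hφ : IsDeltaDerivation (1 / 2) mul φ) (he : ∀ x, mul x e = x)
    (x : M) : φ x = mul x (φ e) := by
  have h := congrArg ((2 : K) • ·) (hφ x e)
  simp only [he, smul_smul, mul_one_div_cancel (two_ne_zero' K), one_smul, two_smul] at h
  exact add_left_cancel h

end IsDeltaDerivation

namespace DirectSum

variable {ι R M : Type*} [DecidableEq ι] [Semiring R] [AddCommMonoid M] [Module R M]
  (ℳ : ι → Submodule R M) [Decomposition ℳ]

theorem coe_decompose_map_eq_smul {f : M →ₗ[R] M} {c : ι → R}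
    (hf : ∀ i, ∀ x ∈ ℳ i, f x = c i • x) (x : M) (i : ι) :
    (decompose ℳ (f x) i : M) = c i • (decompose ℳ x i : M) := by
  induction x using Decomposition.inductionOn ℳ with
  | zero => simp
  | @homogeneous j x =>
    rw [hf j x x.2]
    by_cases hji : j = i
    · subst hji
      rw [decompose_of_mem_same ℳ x.2, decompose_of_mem_same ℳ (Submodule.smul_mem _ _ x.2)]
    · rw [decompose_of_mem_ne ℳ x.2 hji, decompose_of_mem_ne ℳ (Submodule.smul_mem _ _ x.2) hji,
        smul_zero]
  | add x y hx hy => simp [hx, hy, smul_add]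

theorem mem_of_coe_decompose_eq_zero {x : M} {i : ι}
    (hx : ∀ j ≠ i, (decompose ℳ x j : M) = 0) : x ∈ ℳ i := by
  have : decompose ℳ x = of _ i (decompose ℳ x i) := by
    ext j
    by_cases hji : j = i
    · subst hji; rw [of_eq_same]
    · rw [of_eq_of_ne _ _ _ hji, hx j hji, ZeroMemClass.coe_zero]
  rw [← (decompose ℳ).symm_apply_apply x, this, decompose_symm_of]
  exact SetLike.coe_mem _

end DirectSum

theorem CliffordAlgebra.involute_eq_neg_one_pow_smul {R M : Type*} [CommRing R] [AddCommGroup M]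
    [Module R M] {Q : QuadraticForm R M} {x : CliffordAlgebra Q} {i : ZMod 2}
    (hx : x ∈ evenOdd Q i) : involute x = (-1 : R) ^ i.val • x := by
  obtain rfl | rfl := (by decide : ∀ j : ZMod 2, j = 0 ∨ j = 1) i
  · rw [involute_eq_of_mem_even hx, ZMod.val_zero, pow_zero, one_smul]
  · rw [involute_eq_of_mem_odd hx, ZMod.val_one, pow_one, neg_one_smul]

namespace ExteriorAlgebra

section CommRing

variable {R σ : Type*} [CommRing R]

/-- `D j` is `∂/∂eⱼ`, where `eⱼ = ι R (Pi.single j 1)`. -/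
structure IsPartialDerivatives (D : σ → ExteriorAlgebra R (σ → R) →ₗ[R] ExteriorAlgebra R (σ → R)) :
    Prop where
  map_one : ∀ j, D j 1 = 0
  map_ι_mul : ∀ j m x, D j (ι R m * x) = m j • x - ι R m * D j x

namespace IsPartialDerivatives

variable {D : σ → ExteriorAlgebra R (σ → R) →ₗ[R] ExteriorAlgebra R (σ → R)}

theorem map_algebraMap (hD : IsPartialDerivatives D) (j : σ) (r : R) :
    D j (algebraMap R (ExteriorAlgebra R (σ → R)) r) = 0 := by
  rw [Algebra.algebraMap_eq_smul_one, map_smul, hD.map_one, smul_zero]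

theorem map_ι (hD : IsPartialDerivatives D) (j : σ) (m : σ → R) :
    D j (ι R m) = algebraMap R (ExteriorAlgebra R (σ → R)) (m j) := by
  simpa [hD.map_one, Algebra.algebraMap_eq_smul_one] using hD.map_ι_mul j m 1

theorem map_ι_single [DecidableEq σ] (hD : IsPartialDerivatives D) (j k : σ) :
    D k (ι R (Pi.single j 1)) = if k = j then 1 else 0 := by
  rw [hD.map_ι, Pi.single_apply]
  split_ifs <;> simp

theorem sum_ι_single_mul_apply_of_mem [Fintype σ] [DecidableEq σ] (hD : IsPartialDerivatives D)
    {k : ℕ} {x : ExteriorAlgebra R (σ → R)} (hx : x ∈ ⋀[R]^k (σ → R)) :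
    ∑ j, ι R (Pi.single j 1) * D j x = (k : R) • x := by
  induction hx using Submodule.pow_induction_on_left' with
  | algebraMap r => simp [hD.map_algebraMap]
  | add x y i _ _ ihx ihy =>
    simp only [map_add, mul_add, Finset.sum_add_distrib, ihx, ihy, smul_add]
  | mem_mul m hm i x _ ih =>
    obtain ⟨v, rfl⟩ := hm
    have hv : ∑ j, v j • ι R (Pi.single j (1 : R)) = ι R v := by
      simp_rw [← map_smul, ← Pi.single_smul', smul_eq_mul, mul_one, ← map_sum,
        Finset.univ_sum_single]
    have hstep : ∀ j, ι R (Pi.single j 1) * D j (ι R v * x)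
        = v j • ι R (Pi.single j 1) * x + ι R v * (ι R (Pi.single j 1) * D j x) := by
      intro j
      rw [hD.map_ι_mul, mul_sub, mul_smul_comm, ← mul_assoc, ← mul_assoc,
        eq_neg_of_add_eq_zero_left (ι_add_mul_swap _ _), neg_mul, sub_neg_eq_add, smul_mul_assoc]
    rw [Finset.sum_congr rfl fun j _ => hstep j, Finset.sum_add_distrib, ← Finset.sum_mul,
      ← Finset.mul_sum, hv, ih, mul_smul_comm]
    push_cast
    rw [add_smul, one_smul, add_comm]

end IsPartialDerivatives

variable [Fintype σ] {D : σ → ExteriorAlgebra R (σ → R) →ₗ[R] ExteriorAlgebra R (σ → R)}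

/-- The first component of `x̄ • ȳ`: on homogeneous elements it is
`(-1)^(p x + p y) Σₖ ∂ₖx ∂ₖy`, the signs being produced by `involute`. -/
def barMul (D : σ → ExteriorAlgebra R (σ → R) →ₗ[R] ExteriorAlgebra R (σ → R))
    (x y : ExteriorAlgebra R (σ → R)) : ExteriorAlgebra R (σ → R) :=
  ∑ k, D k (involute x) * D k (involute y)

/-- The product of `J(Γ) = Γ ⊕ Γ̄`, with `(a, x)` standing for `a + x̄`. -/
def jordanMul (D : σ → ExteriorAlgebra R (σ → R) →ₗ[R] ExteriorAlgebra R (σ → R)) :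
    (ExteriorAlgebra R (σ → R) × ExteriorAlgebra R (σ → R)) →ₗ[R]
      (ExteriorAlgebra R (σ → R) × ExteriorAlgebra R (σ → R)) →ₗ[R]
      (ExteriorAlgebra R (σ → R) × ExteriorAlgebra R (σ → R)) :=
  LinearMap.mk₂ R (fun z w => (z.1 * w.1 + barMul D z.2 w.2, z.1 * w.2 + z.2 * involute w.1))
    (fun _ _ _ => by
      simp only [barMul, Prod.fst_add, Prod.snd_add, map_add, add_mul, Finset.sum_add_distrib,
        Prod.mk_add_mk]
      abel_nf)
    (fun _ _ _ => by simp [barMul, Finset.smul_sum])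
    (fun _ _ _ => by
      simp only [barMul, Prod.fst_add, Prod.snd_add, map_add, mul_add, Finset.sum_add_distrib,
        Prod.mk_add_mk]
      abel_nf)
    (fun _ _ _ => by simp [barMul, Finset.smul_sum])

@[simp]
theorem jordanMul_apply (a x b y : ExteriorAlgebra R (σ → R)) :
    jordanMul D (a, x) (b, y) = (a * b + barMul D x y, a * y + x * involute b) :=
  rfl

open DirectSum in
theorem eq_jordanMul
    {mul : (ExteriorAlgebra R (σ → R) × ExteriorAlgebra R (σ → R)) →ₗ[R]
      (ExteriorAlgebra R (σ → R) × ExteriorAlgebra R (σ → R)) →ₗ[R]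
      (ExteriorAlgebra R (σ → R) × ExteriorAlgebra R (σ → R))}
    (hmul₁ : ∀ a b, mul (a, 0) (b, 0) = (a * b, 0))
    (hmul₂ : ∀ a b, mul (a, 0) (0, b) = (0, a * b))
    (hmul₃ : ∀ (i : ZMod 2) b, b ∈ evenOdd (0 : QuadraticForm R (σ → R)) i →
      ∀ x, mul (0, x) (b, 0) = (0, ((-1 : R) ^ i.val) • (x * b)))
    (hmul₄ : ∀ (i j : ZMod 2) x y, x ∈ evenOdd (0 : QuadraticForm R (σ → R)) i →
      y ∈ evenOdd (0 : QuadraticForm R (σ → R)) j →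
      mul (0, x) (0, y) = (((-1 : R) ^ (i.val + j.val)) • ∑ k, D k x * D k y, 0)) :
    mul = jordanMul D := by
  have hbar_left : ∀ x b, mul (0, x) (b, 0) = (0, x * involute b) := by
    intro x b
    rw [← LinearMap.inl_apply (R := R)]
    induction b using Decomposition.inductionOn (evenOdd (0 : QuadraticForm R (σ → R))) with
    | zero => simp only [map_zero, mul_zero, Prod.mk_zero_zero]
    | homogeneous b =>
      rw [LinearMap.inl_apply, hmul₃ _ _ b.2, CliffordAlgebra.involute_eq_neg_one_pow_smul b.2,
        mul_smul_comm]
    | add b b' hb hb' =>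
      rw [map_add, map_add, hb, hb', map_add, mul_add, Prod.mk_add_mk, add_zero]
  have hbar_bar : ∀ x y, mul (0, x) (0, y) = (barMul D x y, 0) := by
    intro x y
    rw [← LinearMap.inr_apply (R := R), ← LinearMap.inr_apply (R := R)]
    induction x using Decomposition.inductionOn (evenOdd (0 : QuadraticForm R (σ → R))) with
    | zero => simp only [map_zero, LinearMap.zero_apply]; ext <;> simp [barMul]
    | add x x' hx hx' =>
      rw [map_add, map_add, LinearMap.add_apply, hx, hx']
      simp [barMul, add_mul, Finset.sum_add_distrib]
    | homogeneous x =>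
      induction y using Decomposition.inductionOn (evenOdd (0 : QuadraticForm R (σ → R))) with
      | zero => simp only [map_zero]; ext <;> simp [barMul]
      | add y y' hy hy' =>
        rw [map_add, map_add, hy, hy']
        simp [barMul, mul_add, Finset.sum_add_distrib]
      | homogeneous y =>
        rw [LinearMap.inr_apply, LinearMap.inr_apply, hmul₄ _ _ _ _ x.2 y.2, barMul,
          CliffordAlgebra.involute_eq_neg_one_pow_smul x.2,
          CliffordAlgebra.involute_eq_neg_one_pow_smul y.2]
        simp [Finset.smul_sum, pow_add, smul_smul, mul_comm]
  have split : ∀ u v : ExteriorAlgebra R (σ → R), ((u, v) : _ × _) = (u, 0) + (0, v) := by simp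
  refine LinearMap.ext₂ fun ⟨a, x⟩ ⟨b, y⟩ => ?_
  rw [split a x, split b y]
  simp only [map_add, LinearMap.add_apply, hmul₁, hmul₂, hbar_left, hbar_bar, jordanMul_apply]
  simp [barMul]

theorem jordanMul_one_zero_left (z : ExteriorAlgebra R (σ → R) × ExteriorAlgebra R (σ → R)) :
    jordanMul D (1, 0) z = z := by
  obtain ⟨b, y⟩ := z
  simp [barMul]

theorem jordanMul_one_zero_right (z : ExteriorAlgebra R (σ → R) × ExteriorAlgebra R (σ → R)) :
    jordanMul D z (1, 0) = z := by
  obtain ⟨a, x⟩ := z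
  simp [barMul]

theorem IsPartialDerivatives.barMul_one_left (hD : IsPartialDerivatives D)
    (y : ExteriorAlgebra R (σ → R)) : barMul D 1 y = 0 := by
  simp [barMul, hD.map_one]

theorem IsPartialDerivatives.barMul_one_right (hD : IsPartialDerivatives D)
    (x : ExteriorAlgebra R (σ → R)) : barMul D x 1 = 0 := by
  simp [barMul, hD.map_one]

theorem IsPartialDerivatives.barMul_ι_single_right [DecidableEq σ] (hD : IsPartialDerivatives D)
    (x : ExteriorAlgebra R (σ → R)) (j : σ) :
    barMul D x (ι R (Pi.single j 1)) = -D j (involute x) := by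
  simp [barMul, hD.map_ι_single]

end CommRing

section Field

variable {F σ : Type*} [Field F] [CharZero F] [Fintype σ] [DecidableEq σ]
  {D : σ → ExteriorAlgebra F (σ → F) →ₗ[F] ExteriorAlgebra F (σ → F)}

theorem IsPartialDerivatives.exists_algebraMap_eq_of_forall_eq_zero (hD : IsPartialDerivatives D)
    {x : ExteriorAlgebra F (σ → F)} (hx : ∀ j, D j x = 0) :
    ∃ α : F, algebraMap F (ExteriorAlgebra F (σ → F)) α = x := by
  let euler : ExteriorAlgebra F (σ → F) →ₗ[F] ExteriorAlgebra F (σ → F) :=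
    ∑ j, LinearMap.mulLeft F (ι F (Pi.single j 1)) ∘ₗ D j
  have h_euler : ∀ (k : ℕ), ∀ y ∈ ⋀[F]^k (σ → F), euler y = (k : F) • y := fun k y hy => by
    simpa [euler] using hD.sum_ι_single_mul_apply_of_mem hy
  have hcomp : ∀ k ≠ 0,
      (DirectSum.decompose (fun k : ℕ => ⋀[F]^k (σ → F)) x k : ExteriorAlgebra F (σ → F)) = 0 := by
    intro k hk
    have h := DirectSum.coe_decompose_map_eq_smul _ h_euler x k
    rw [show euler x = 0 by simp [euler, hx], DirectSum.decompose_zero, DirectSum.zero_apply,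
      ZeroMemClass.coe_zero, eq_comm, smul_eq_zero] at h
    exact h.resolve_left (Nat.cast_ne_zero.mpr hk)
  have h0 := DirectSum.mem_of_coe_decompose_eq_zero _ hcomp
  change x ∈ LinearMap.range (ι F) ^ 0 at h0
  rwa [pow_zero, Submodule.mem_one] at h0

theorem IsPartialDerivatives.exists_eq_smul_of_isDeltaDerivation_jordanMul [Nonempty σ]
    (hD : IsPartialDerivatives D)
    {φ : (ExteriorAlgebra F (σ → F) × ExteriorAlgebra F (σ → F)) →ₗ[F]
      (ExteriorAlgebra F (σ → F) × ExteriorAlgebra F (σ → F))}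
    (hφ : IsDeltaDerivation (1 / 2) (jordanMul D) φ) :
    ∃ α : F, ∀ z, φ z = α • z := by
  rcases hc : φ (1, 0) with ⟨a, b⟩
  have hleft : ∀ z, φ z = jordanMul D (a, b) z := hc ▸ hφ.apply_eq_mul_left jordanMul_one_zero_left
  have hright : ∀ z, φ z = jordanMul D z (a, b) :=
    hc ▸ hφ.apply_eq_mul_right jordanMul_one_zero_right
  have hφ_bar_one : φ (0, 1) = (0, a) := by simp [hleft, hD.barMul_one_right]
  have hφ_bar_single : ∀ j, φ (0, ι F (Pi.single j 1)) =
      (-D j (involute b), a * ι F (Pi.single j 1)) := by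
    simp [hleft, hD.barMul_ι_single_right]
  have hD_involute : ∀ j, D j (involute a) = 0 ∧ D j (involute b) = 0 := by
    intro j
    have h := hφ (0, 1) (0, ι F (Pi.single j 1))
    have h0 : jordanMul D (0, 1) (0, ι F (Pi.single j 1)) = 0 := by
      ext <;> simp [hD.barMul_one_left]
    rw [h0, map_zero] at h
    simp [hφ_bar_one, hφ_bar_single, hD.barMul_one_left, hD.barMul_ι_single_right,
      Prod.ext_iff] at h
    exact ⟨h.1, (map_eq_zero_iff _ CliffordAlgebra.involute_involutive.injective).mp h.2⟩
  have hb : b = 0 := by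
    -- `ēⱼ • ēⱼ = 1`, and both products on the right of the identity lie in `Γ`.
    obtain ⟨j⟩ := ‹Nonempty σ›
    have h := hφ (0, ι F (Pi.single j 1)) (0, ι F (Pi.single j 1))
    simp [hφ_bar_single, (hD_involute j).2, hD.barMul_ι_single_right, hD.map_ι_single, hc] at h
    exact h.2
  obtain ⟨α, hα⟩ := hD.exists_algebraMap_eq_of_forall_eq_zero fun j => (hD_involute j).1
  have ha : a = algebraMap F _ α := by
    rw [← CliffordAlgebra.involute_involute a, ← hα, AlgHom.commutes]
  have hc_smul : ((a, b) : _ × _) = α • ((1, 0) : _ × _) :=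
    Prod.ext (by simp [ha, Algebra.algebraMap_eq_smul_one]) (by simp [hb])
  exact ⟨α, fun z => by rw [hright, hc_smul, map_smul, jordanMul_one_zero_right]⟩

end Field

end ExteriorAlgebra

/-- **1/2-derivations of the Jordan superalgebra `J(Γₙ)` of a Grassmann
algebra.**
Let `F` be a field of characteristic `0` and `n ≥ 2`.  The Grassmann
algebra `Γₙ` on `n` anticommuting generators is the exterior algebra of
`Fⁿ`; its generators are `eⱼ = ι (Pi.single j 1)`, its `ℤ/2`-parity
grading is `CliffordAlgebra.evenOdd 0`, and the partial derivatives
`∂/∂eⱼ` are the unique linear maps `D j` with `D j 1 = 0` and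
`D j (ι m * x) = m j • x − ι m * D j x`.  The superalgebra
`J(Γₙ) = Γₙ ⊕ Γ̄ₙ` is realized as `Γₙ × Γₙ` (second factor the copy
`Γ̄ₙ`), with the bilinear product `mul` determined on parity-homogeneous
elements by `a • b = ab`, `a • b̄ = (ab)‾`, `ā • b = (−1)^{p(b)}(ab)‾` and
`ā • b̄ = (−1)^{p(a)+p(b)} Σⱼ (∂a/∂eⱼ)(∂b/∂eⱼ)`
(that is, `ā • b̄ = (−1)^{p(b)} {a,b}` with
`{a,b} = (−1)^{p(a)} Σⱼ (∂a/∂eⱼ)(∂b/∂eⱼ)`).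
Then every `1/2`-derivation `φ` of `J(Γₙ)` is of the form `φ x = α • x`
for some `α ∈ F`. -/
theorem half_derivation_of_grassmann_jordan_superalgebra
    {F : Type*} [Field F] [CharZero F] (n : ℕ) (hn : 2 ≤ n)
    (D : Fin n → (ExteriorAlgebra F (Fin n → F) →ₗ[F] ExteriorAlgebra F (Fin n → F)))
    (hDone : ∀ j, D j 1 = 0)
    (hDmul : ∀ (j : Fin n) (m : Fin n → F) (x : ExteriorAlgebra F (Fin n → F)),
      D j (ExteriorAlgebra.ι F m * x) = m j • x - ExteriorAlgebra.ι F m * D j x)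
    (mul : (ExteriorAlgebra F (Fin n → F) × ExteriorAlgebra F (Fin n → F)) →ₗ[F]
      (ExteriorAlgebra F (Fin n → F) × ExteriorAlgebra F (Fin n → F)) →ₗ[F]
      (ExteriorAlgebra F (Fin n → F) × ExteriorAlgebra F (Fin n → F)))
    (hmul₁ : ∀ a b : ExteriorAlgebra F (Fin n → F), mul (a, 0) (b, 0) = (a * b, 0))
    (hmul₂ : ∀ a b : ExteriorAlgebra F (Fin n → F), mul (a, 0) (0, b) = (0, a * b))
    (hmul₃ : ∀ (i : ZMod 2) (b : ExteriorAlgebra F (Fin n → F)),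
      b ∈ CliffordAlgebra.evenOdd (0 : QuadraticForm F (Fin n → F)) i →
      ∀ x : ExteriorAlgebra F (Fin n → F),
        mul (0, x) (b, 0) = (0, ((-1 : F) ^ i.val) • (x * b)))
    (hmul₄ : ∀ (i j : ZMod 2) (x y : ExteriorAlgebra F (Fin n → F)),
      x ∈ CliffordAlgebra.evenOdd (0 : QuadraticForm F (Fin n → F)) i →
      y ∈ CliffordAlgebra.evenOdd (0 : QuadraticForm F (Fin n → F)) j →
      mul (0, x) (0, y)
        = (((-1 : F) ^ (i.val + j.val)) • ∑ k : Fin n, D k x * D k y, 0))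
    (φ : (ExteriorAlgebra F (Fin n → F) × ExteriorAlgebra F (Fin n → F)) →ₗ[F]
      (ExteriorAlgebra F (Fin n → F) × ExteriorAlgebra F (Fin n → F)))
    (hφ : ∀ x y : ExteriorAlgebra F (Fin n → F) × ExteriorAlgebra F (Fin n → F),
      φ (mul x y) = (1 / 2 : F) • (mul (φ x) y + mul x (φ y))) :
    ∃ α : F, ∀ x : ExteriorAlgebra F (Fin n → F) × ExteriorAlgebra F (Fin n → F),
      φ x = α • x := by
  have hD : ExteriorAlgebra.IsPartialDerivatives D := ⟨hDone, hDmul⟩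
  obtain rfl := ExteriorAlgebra.eq_jordanMul hmul₁ hmul₂ hmul₃ hmul₄
  have : Nonempty (Fin n) := ⟨⟨0, by omega⟩⟩
  exact hD.exists_eq_smul_of_isDeltaDerivation_jordanMul hφ
end
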